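/- arXiv:2405.03020 — 4 statements merged into one kernel-verified Lean document; each statement's English description precedes it below -/
import Mathlib

section
/- For m ∈ {1, …, n}, the intersection of the zero set of the model polynomial π_m(z) = 1 − m^{m/2} z₁⋯z_m with the closed unit ball of ℂⁿ equals the set {(1/√m)(e^{iθ₁}, …, e^{iθ_{m−1}}, e^{−i(θ₁+⋯+θ_{m−1})}, 0, …, 0) : θ₁, …, θ_{m−1} ∈ [0, 2π)}, and this set lies on the unit sphere. -/
open scoped Real
open Finset

/-- The model polynomial `π_m(z) = 1 − m^{m/2} z₁⋯z_m` on ℂⁿ. -/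
noncomputable def modelPoly (n m : ℕ) (z : EuclideanSpace ℂ (Fin n)) : ℂ :=
  1 - ((m : ℝ) ^ ((m : ℝ) / 2) : ℝ) *
    ∏ i ∈ Finset.univ.filter (fun i : Fin n => (i : ℕ) < m), z i

/-- The parametrized torus
`(1/√m)(e^{iθ₁}, …, e^{iθ_{m−1}}, e^{−i(θ₁+⋯+θ_{m−1})}, 0, …, 0)` in ℂⁿ. -/
noncomputable def modelTorusPoint (n m : ℕ) (θ : Fin (m - 1) → ℝ) :
    EuclideanSpace ℂ (Fin n) :=
  (WithLp.equiv 2 (Fin n → ℂ)).symm (fun i : Fin n =>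
    if h : (i : ℕ) < m - 1 then
      ((Real.sqrt m)⁻¹ : ℝ) * Complex.exp (Complex.I * (θ ⟨i, h⟩ : ℝ))
    else if (i : ℕ) = m - 1 then
      ((Real.sqrt m)⁻¹ : ℝ) * Complex.exp (-Complex.I * ((∑ j, θ j : ℝ) : ℂ))
    else 0)

lemma filter_eq_map (k n : ℕ) (hkn : k ≤ n) :
    Finset.univ.filter (fun i : Fin n => (i : ℕ) < k)
      = Finset.univ.map (Fin.castLEEmb hkn) := by
  ext i
  simp only [mem_filter, mem_univ, true_and, mem_map, Fin.castLEEmb_apply]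
  constructor
  · intro h; exact ⟨⟨i, h⟩, by simp [Fin.castLE, Fin.ext_iff]⟩
  · rintro ⟨j, rfl⟩; exact j.2

lemma sqrt_pos' (m' : ℕ) : (0:ℝ) < Real.sqrt (m'+1) := by
  rw [Real.sqrt_pos]; positivity

lemma torus_apply_lt (n m' : ℕ) (θ : Fin m' → ℝ) (i : Fin n) (h : (i:ℕ) < m') :
    modelTorusPoint n (m'+1) θ i
      = ((Real.sqrt (m'+1))⁻¹ : ℝ) * Complex.exp (Complex.I * (θ ⟨i, h⟩ : ℝ)) := by
  simp only [modelTorusPoint, WithLp.equiv_symm_apply, PiLp.toLp_apply, Nat.add_sub_cancel]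
  rw [dif_pos h]
  norm_num

lemma torus_apply_eq (n m' : ℕ) (θ : Fin m' → ℝ) (i : Fin n) (h : (i:ℕ) = m') :
    modelTorusPoint n (m'+1) θ i
      = ((Real.sqrt (m'+1))⁻¹ : ℝ) * Complex.exp (-Complex.I * ((∑ j, θ j : ℝ) : ℂ)) := by
  simp only [modelTorusPoint, WithLp.equiv_symm_apply, PiLp.toLp_apply, Nat.add_sub_cancel]
  rw [dif_neg (by omega), if_pos (by omega)]
  norm_num
  exact Or.inl rfl

lemma torus_apply_ge (n m' : ℕ) (θ : Fin m' → ℝ) (i : Fin n) (h : ¬ (i:ℕ) < m'+1) :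
    modelTorusPoint n (m'+1) θ i = 0 := by
  simp only [modelTorusPoint, WithLp.equiv_symm_apply, PiLp.toLp_apply, Nat.add_sub_cancel]
  rw [dif_neg (by omega), if_neg (by omega)]

lemma torus_norm_apply (n m' : ℕ) (θ : Fin m' → ℝ) (i : Fin n) (h : (i:ℕ) < m'+1) :
    ‖modelTorusPoint n (m'+1) θ i‖ = (Real.sqrt (m'+1))⁻¹ := by
  rcases Nat.lt_or_ge (i:ℕ) m' with h' | h'
  · rw [torus_apply_lt n m' θ i h']
    simp [Complex.norm_exp, abs_of_nonneg (sqrt_pos' m').le]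
  · rw [torus_apply_eq n m' θ i (by omega)]
    simp [Complex.norm_exp, abs_of_nonneg (sqrt_pos' m').le]

lemma torus_norm (n m' : ℕ) (hmn : m'+1 ≤ n) (θ : Fin m' → ℝ) :
    ‖modelTorusPoint n (m'+1) θ‖ = 1 := by
  rw [EuclideanSpace.norm_eq]
  have : ∑ i : Fin n, ‖modelTorusPoint n (m'+1) θ i‖ ^ 2 = 1 := by
    rw [← Finset.sum_filter_add_sum_filter_not Finset.univ
      (fun i : Fin n => (i:ℕ) < m'+1)]
    have h1 : ∑ i ∈ Finset.univ.filter (fun i : Fin n => (i:ℕ) < m'+1),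
        ‖modelTorusPoint n (m'+1) θ i‖ ^ 2 = 1 := by
      rw [Finset.sum_congr rfl (fun i hi => by
        rw [torus_norm_apply n m' θ i (by simpa using (Finset.mem_filter.mp hi).2)])]
      rw [Finset.sum_const, filter_eq_map _ _ hmn, Finset.card_map, Finset.card_univ]
      simp only [Fintype.card_fin, nsmul_eq_mul]
      rw [← Real.sqrt_inv, Real.sq_sqrt (by positivity)]
      field_simp
      push_cast; ring
    have h2 : ∑ i ∈ Finset.univ.filter (fun i : Fin n => ¬ (i:ℕ) < m'+1),
        ‖modelTorusPoint n (m'+1) θ i‖ ^ 2 = 0 := by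
      apply Finset.sum_eq_zero
      intro i hi
      rw [torus_apply_ge n m' θ i (by simpa using (Finset.mem_filter.mp hi).2)]
      simp
    rw [h1, h2]; ring
  rw [this, Real.sqrt_one]

lemma coeff_eq (m : ℕ) : ((m : ℝ) ^ ((m : ℝ) / 2)) = (Real.sqrt m) ^ m := by
  rw [Real.sqrt_eq_rpow, ← Real.rpow_natCast ((m:ℝ) ^ (1/2:ℝ)) m,
    ← Real.rpow_mul (Nat.cast_nonneg m)]
  ring_nf

lemma torus_prod (n m' : ℕ) (hmn : m'+1 ≤ n) (θ : Fin m' → ℝ) :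
    ∏ i ∈ Finset.univ.filter (fun i : Fin n => (i:ℕ) < m'+1),
      modelTorusPoint n (m'+1) θ i
    = ((((Real.sqrt (m'+1) : ℝ) : ℂ))⁻¹) ^ (m'+1) := by
  rw [filter_eq_map _ _ hmn, Finset.prod_map, Fin.prod_univ_castSucc]
  have h1 : ∀ j : Fin m',
      modelTorusPoint n (m'+1) θ (Fin.castLEEmb hmn j.castSucc)
        = (((Real.sqrt (m'+1) : ℝ) : ℂ))⁻¹ * Complex.exp (Complex.I * (θ j : ℝ)) := by
    intro j
    rw [torus_apply_lt n m' θ _ (by simpa using j.2)]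
    push_cast
    congr 2
  have h2 : modelTorusPoint n (m'+1) θ (Fin.castLEEmb hmn (Fin.last m'))
      = (((Real.sqrt (m'+1) : ℝ) : ℂ))⁻¹
        * Complex.exp (-Complex.I * ((∑ j, θ j : ℝ) : ℂ)) := by
    rw [torus_apply_eq n m' θ _ (by simp [Fin.last])]
    push_cast
    ring_nf
  rw [Finset.prod_congr rfl (fun j _ => h1 j), h2, Finset.prod_mul_distrib,
    Finset.prod_const, ← Complex.exp_sum, ← Finset.mul_sum, Finset.card_univ,
    Fintype.card_fin]
  have hc : ((∑ j, θ j : ℝ) : ℂ) = ∑ j, ((θ j : ℝ) : ℂ) := by push_cast; rfl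
  rw [← hc]
  have : Complex.I * ((∑ j, θ j : ℝ) : ℂ) + -Complex.I * ((∑ j, θ j : ℝ) : ℂ) = 0 := by ring
  calc ((((Real.sqrt (m'+1) : ℝ) : ℂ))⁻¹ ^ m'
          * Complex.exp (Complex.I * ((∑ j, θ j : ℝ) : ℂ)))
        * ((((Real.sqrt (m'+1) : ℝ) : ℂ))⁻¹
          * Complex.exp (-Complex.I * ((∑ j, θ j : ℝ) : ℂ)))
      = (((Real.sqrt (m'+1) : ℝ) : ℂ))⁻¹ ^ (m'+1)
        * Complex.exp (Complex.I * ((∑ j, θ j : ℝ) : ℂ)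
            + -Complex.I * ((∑ j, θ j : ℝ) : ℂ)) := by
        rw [Complex.exp_add]; ring
    _ = ((((Real.sqrt (m'+1) : ℝ) : ℂ))⁻¹) ^ (m'+1) := by
        rw [this, Complex.exp_zero, mul_one]
  

lemma torus_zero (n m' : ℕ) (hmn : m'+1 ≤ n) (θ : Fin m' → ℝ) :
    modelPoly n (m'+1) (modelTorusPoint n (m'+1) θ) = 0 := by
  unfold modelPoly
  rw [torus_prod n m' hmn θ, coeff_eq]
  push_cast
  rw [← mul_pow, mul_inv_cancel₀ (by exact_mod_cast (sqrt_pos' m').ne'), one_pow, sub_self]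

lemma amgm_eq {ι : Type*} {s : Finset ι} {m : ℕ} (hm : 1 ≤ m) (hcard : s.card = m)
    (a : ι → ℝ) (ha : ∀ i ∈ s, 0 ≤ a i) (hsum : ∑ i ∈ s, a i ≤ 1)
    (hprod : ∏ i ∈ s, a i = (1 / m : ℝ) ^ m) : ∀ i ∈ s, a i = 1 / m := by
  have hm0 : (0:ℝ) < m := by exact_mod_cast hm
  have hpos : ∀ i ∈ s, 0 < a i := by
    intro i hi
    rcases (ha i hi).lt_or_eq with h | h
    · exact h
    · exfalso
      have h0 : ∏ j ∈ s, a j = 0 := Finset.prod_eq_zero hi h.symm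
      rw [hprod] at h0
      have : (0:ℝ) < (1/m)^m := by positivity
      linarith
  have key : ∀ ⦃j⦄, j ∈ s → ∀ ⦃k⦄, k ∈ s → a j = a k := by
    apply strictConcaveOn_log_Ioi.eq_of_map_sum_eq (w := fun _ => (1/m : ℝ))
      (p := a) (fun i _ => by positivity)
      (by rw [Finset.sum_const, hcard, nsmul_eq_mul]; field_simp)
      (fun i hi => Set.mem_Ioi.2 (hpos i hi))
    have h1 : ∑ i ∈ s, (1/m : ℝ) • Real.log (a i) = Real.log (1/m) := by
      rw [← Finset.smul_sum, ← Real.log_prod (fun i hi => (hpos i hi).ne'), hprod,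
        Real.log_pow]
      simp only [smul_eq_mul, nsmul_eq_mul]
      field_simp
    have hsum' : ∑ i ∈ s, (1/m : ℝ) • a i ≤ 1/m := by
      rw [← Finset.smul_sum, smul_eq_mul]
      calc (1/m : ℝ) * ∑ i ∈ s, a i ≤ (1/m) * 1 :=
            mul_le_mul_of_nonneg_left hsum (by positivity)
        _ = 1/m := mul_one _
    have hsumpos : 0 < ∑ i ∈ s, (1/m : ℝ) • a i := by
      have hne : s.Nonempty := by rw [← Finset.card_pos, hcard]; omega
      apply Finset.sum_pos (fun i hi => by have := hpos i hi; positivity) hne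
    rw [h1]
    exact Real.log_le_log hsumpos hsum'
  intro i hi
  have hprod' : ∏ j ∈ s, a j = a i ^ m := by
    rw [← hcard, ← Finset.prod_const]
    exact Finset.prod_congr rfl (fun j hj => key hj hi)
  rw [hprod] at hprod'
  exact ((pow_left_inj₀ (ha i hi) (by positivity) (by omega : m ≠ 0)).mp hprod'.symm)

lemma forward (n m' : ℕ) (hmn : m'+1 ≤ n) (z : EuclideanSpace ℂ (Fin n))
    (hz : modelPoly n (m'+1) z = 0) (hb : ‖z‖ ≤ 1) :
    ∃ θ : Fin m' → ℝ, (∀ j, θ j ∈ Set.Ico 0 (2*π)) ∧ z = modelTorusPoint n (m'+1) θ := by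
  set c : ℝ := Real.sqrt (m'+1) with hc_def
  have hc : 0 < c := sqrt_pos' m'
  set s : Finset (Fin n) := Finset.univ.filter (fun i : Fin n => (i:ℕ) < m'+1) with hs_def
  have hcard : s.card = m'+1 := by
    rw [hs_def, filter_eq_map _ _ hmn, Finset.card_map, Finset.card_univ, Fintype.card_fin]
  -- product of z over s
  have hprodz : ∏ i ∈ s, z i = (((c : ℝ) : ℂ))⁻¹ ^ (m'+1) := by
    unfold modelPoly at hz
    rw [sub_eq_zero] at hz
    rw [coeff_eq] at hz
    have hcoeff : ((Real.sqrt ((m'+1 : ℕ) : ℝ) ^ (m'+1) : ℝ) : ℂ) ≠ 0 := by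
      push_cast
      apply pow_ne_zero
      exact_mod_cast (by push_cast; exact hc.ne' : Real.sqrt (((m'+1 : ℕ)):ℝ) ≠ 0)
    field_simp at hz ⊢
    rw [div_pow, one_pow, eq_div_iff (pow_ne_zero _ (Complex.ofReal_ne_zero.mpr hc.ne')), mul_comm]
    rw [hz, hc_def]; push_cast; ring
  -- sum bound
  have hsum_univ : ∑ i : Fin n, ‖z i‖ ^ 2 ≤ 1 := by
    have h0 : (0:ℝ) ≤ ∑ i : Fin n, ‖z i‖ ^ 2 :=
      Finset.sum_nonneg fun i _ => by positivity
    have hb' : Real.sqrt (∑ i : Fin n, ‖z i‖ ^ 2) ≤ 1 := by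
      rw [← EuclideanSpace.norm_eq]; exact hb
    nlinarith [Real.sq_sqrt h0, Real.sqrt_nonneg (∑ i : Fin n, ‖z i‖ ^ 2)]
  have hsum_s : ∑ i ∈ s, ‖z i‖ ^ 2 ≤ 1 := by
    refine le_trans (Finset.sum_le_sum_of_subset_of_nonneg (Finset.subset_univ s)
      (fun i _ _ => by positivity)) hsum_univ
  -- product of squares
  have hprod_a : ∏ i ∈ s, ‖z i‖ ^ 2 = (1 / ((m':ℝ)+1)) ^ (m'+1) := by
    rw [Finset.prod_pow, ← norm_prod, hprodz, norm_pow, norm_inv,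
      Complex.norm_real, Real.norm_eq_abs, abs_of_pos hc, ← pow_mul,
      mul_comm (m'+1) 2, pow_mul, inv_pow, hc_def,
      Real.sq_sqrt (by positivity : (0:ℝ) ≤ (m':ℝ)+1)]
    norm_num
  have hmain : ∀ i ∈ s, ‖z i‖ ^ 2 = 1 / ((m':ℝ)+1) := by
    have := amgm_eq (m := m'+1) (by omega) hcard (fun i => ‖z i‖ ^ 2)
      (fun i _ => by positivity) hsum_s (by push_cast; convert hprod_a using 2 <;> norm_num)
    intro i hi
    have h := this i hi
    push_cast at h
    exact h
  -- z vanishes outside s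
  have hsum_s_eq : ∑ i ∈ s, ‖z i‖ ^ 2 = 1 := by
    rw [Finset.sum_congr rfl hmain, Finset.sum_const, hcard, nsmul_eq_mul]
    push_cast
    field_simp
  have hz_out : ∀ i : Fin n, ¬ ((i:ℕ) < m'+1) → z i = 0 := by
    have hsplit := Finset.sum_filter_add_sum_filter_not Finset.univ
      (fun i : Fin n => (i:ℕ) < m'+1) (fun i => ‖z i‖ ^ 2)
    have hrest : ∑ i ∈ Finset.univ.filter (fun i : Fin n => ¬ (i:ℕ) < m'+1),
        ‖z i‖ ^ 2 = 0 := by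
      have h1 : (0:ℝ) ≤ ∑ i ∈ Finset.univ.filter (fun i : Fin n => ¬ (i:ℕ) < m'+1),
          ‖z i‖ ^ 2 := Finset.sum_nonneg fun i _ => by positivity
      have h2 : ∑ i ∈ s, ‖z i‖ ^ 2
          + ∑ i ∈ Finset.univ.filter (fun i : Fin n => ¬ (i:ℕ) < m'+1), ‖z i‖ ^ 2 ≤ 1 := by
        rw [hs_def]; rw [hsplit]; exact hsum_univ
      rw [hsum_s_eq] at h2
      linarith
    intro i hi
    have := (Finset.sum_eq_zero_iff_of_nonneg (fun j _ => by positivity)).mp hrest i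
      (by simp only [Finset.mem_filter, Finset.mem_univ, true_and]; omega)
    have hn : ‖z i‖ = 0 := by
      have := this
      nlinarith [norm_nonneg (z i)]
    simpa using hn
  -- modulus on s
  have habs : ∀ i ∈ s, ‖z i‖ = c⁻¹ := by
    intro i hi
    have h := hmain i hi
    have h2 : ‖z i‖ ^ 2 = (c⁻¹) ^ 2 := by
      rw [h, inv_pow, hc_def,
        Real.sq_sqrt (by positivity : (0:ℝ) ≤ (m':ℝ)+1)]
      norm_num
    exact (pow_left_inj₀ (norm_nonneg _) (by positivity) two_ne_zero).mp h2
  -- the phases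
  set θ : Fin m' → ℝ := fun j =>
    if Complex.arg (z ⟨(j:ℕ), by have := j.2; omega⟩) < 0 then
      Complex.arg (z ⟨(j:ℕ), by have := j.2; omega⟩) + 2*π
    else Complex.arg (z ⟨(j:ℕ), by have := j.2; omega⟩) with hθ_def
  have hθmem : ∀ j, θ j ∈ Set.Ico 0 (2*π) := by
    intro j
    have hpi := Real.pi_pos
    have h1 := Complex.neg_pi_lt_arg (z ⟨(j:ℕ), by have := j.2; omega⟩)
    have h2 := Complex.arg_le_pi (z ⟨(j:ℕ), by have := j.2; omega⟩)
    rw [hθ_def]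
    dsimp only
    split_ifs with h
    · exact ⟨by linarith, by linarith⟩
    · exact ⟨by linarith, by linarith⟩
  have hzj : ∀ j : Fin m', z ⟨(j:ℕ), by have := j.2; omega⟩
      = ((c⁻¹ : ℝ) : ℂ) * Complex.exp (Complex.I * ((θ j : ℝ) : ℂ)) := by
    intro j
    set i : Fin n := ⟨(j:ℕ), by have := j.2; omega⟩ with hi_def
    have hiS : i ∈ s := by
      rw [hs_def]
      simp only [Finset.mem_filter, Finset.mem_univ, true_and]
      have := j.2; show (j:ℕ) < m'+1; omega
    have habs_i := habs i hiS
    have hrep := Complex.norm_mul_exp_arg_mul_I (z i)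
    rw [habs_i] at hrep
    have hexp : Complex.exp ((Complex.arg (z i) : ℂ) * Complex.I)
        = Complex.exp (Complex.I * ((θ j : ℝ) : ℂ)) := by
      rw [hθ_def]
      dsimp only
      split_ifs with h
      · push_cast
        rw [mul_add, Complex.exp_add, mul_comm Complex.I (Complex.arg (z i) : ℂ)]
        have : Complex.I * (2 * (π:ℂ)) = 2 * π * Complex.I := by ring
        rw [this, Complex.exp_two_pi_mul_I, mul_one]
      · rw [mul_comm]
    rw [← hrep, hexp]
  refine ⟨θ, hθmem, ?_⟩
  refine PiLp.ext (fun i => ?_)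
  rcases Nat.lt_or_ge (i : ℕ) m' with h1 | h1
  · rw [torus_apply_lt n m' θ i h1]
    exact hzj ⟨(i:ℕ), h1⟩
  rcases Nat.lt_or_ge (i : ℕ) (m'+1) with h2 | h2
  · have h2' : (i:ℕ) = m' := by omega
    rw [torus_apply_eq n m' θ i h2']
    have hzlast : (Fin.castLEEmb hmn) (Fin.last m') = i := by
      apply Fin.ext
      simp [Fin.last, h2'.symm]
    have hsplit2 : ∏ k ∈ s, z k
        = (∏ j : Fin m', z ((Fin.castLEEmb hmn) (Fin.castSucc j))) * z i := by
      rw [hs_def, filter_eq_map _ _ hmn, Finset.prod_map, Fin.prod_univ_castSucc, hzlast]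
    have hprod1 : ∏ j : Fin m', z ((Fin.castLEEmb hmn) (Fin.castSucc j))
        = ((c⁻¹ : ℝ) : ℂ) ^ m' * Complex.exp (Complex.I * ((∑ j, θ j : ℝ) : ℂ)) := by
      have hco : ∀ j : Fin m', z ((Fin.castLEEmb hmn) (Fin.castSucc j))
          = ((c⁻¹ : ℝ) : ℂ) * Complex.exp (Complex.I * ((θ j : ℝ) : ℂ)) := fun j => hzj j
      rw [Finset.prod_congr rfl (fun j _ => hco j), Finset.prod_mul_distrib,
        Finset.prod_const, ← Complex.exp_sum, ← Finset.mul_sum, Finset.card_univ,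
        Fintype.card_fin]
      have hcast : ((∑ j, θ j : ℝ) : ℂ) = ∑ j, ((θ j : ℝ) : ℂ) := by push_cast; rfl
      rw [← hcast]
    have hA : ((c⁻¹ : ℝ) : ℂ) ^ m' * Complex.exp (Complex.I * ((∑ j, θ j : ℝ) : ℂ)) * z i
        = ((c : ℝ) : ℂ)⁻¹ ^ (m'+1) := by
      rw [hprod1] at hsplit2
      exact hsplit2.symm.trans hprodz
    have hE : Complex.exp (Complex.I * ((∑ j, θ j : ℝ) : ℂ))
        * Complex.exp (-Complex.I * ((∑ j, θ j : ℝ) : ℂ)) = 1 := by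
      rw [← Complex.exp_add,
        show Complex.I * ((∑ j, θ j : ℝ) : ℂ)
          + -Complex.I * ((∑ j, θ j : ℝ) : ℂ) = 0 from by ring,
        Complex.exp_zero]
    have hB : ((c⁻¹ : ℝ) : ℂ) ^ m' * Complex.exp (Complex.I * ((∑ j, θ j : ℝ) : ℂ))
        * ((((Real.sqrt (m'+1))⁻¹ : ℝ) : ℂ)
            * Complex.exp (-Complex.I * ((∑ j, θ j : ℝ) : ℂ)))
        = ((c : ℝ) : ℂ)⁻¹ ^ (m'+1) := by
      simp only [Complex.ofReal_inv, hc_def]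
      rw [show ((Real.sqrt ((m':ℝ)+1) : ℂ))⁻¹ ^ m'
            * Complex.exp (Complex.I * ((∑ j, θ j : ℝ) : ℂ))
          * (((Real.sqrt ((m':ℝ)+1) : ℂ))⁻¹
            * Complex.exp (-Complex.I * ((∑ j, θ j : ℝ) : ℂ)))
          = ((Real.sqrt ((m':ℝ)+1) : ℂ))⁻¹ ^ (m'+1)
            * (Complex.exp (Complex.I * ((∑ j, θ j : ℝ) : ℂ))
              * Complex.exp (-Complex.I * ((∑ j, θ j : ℝ) : ℂ))) from by ring,
        hE, mul_one]
    have hfac_ne : ((c⁻¹ : ℝ) : ℂ) ^ m'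
        * Complex.exp (Complex.I * ((∑ j, θ j : ℝ) : ℂ)) ≠ 0 :=
      mul_ne_zero (pow_ne_zero _ (Complex.ofReal_ne_zero.mpr (by positivity)))
        (Complex.exp_ne_zero _)
    exact mul_left_cancel₀ hfac_ne (hA.trans hB.symm)
  · rw [torus_apply_ge n m' θ i (by omega)]
    exact hz_out i (by omega)

/-- For `m ∈ {1, …, n}`, the intersection of the zero set of the model polynomial
`π_m` with the closed unit ball of ℂⁿ equals the set
`{(1/√m)(e^{iθ₁}, …, e^{iθ_{m−1}}, e^{−i(θ₁+⋯+θ_{m−1})}, 0, …, 0) : θⱼ ∈ [0, 2π)}`,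
and this set lies on the unit sphere. -/
theorem modelPoly_zero_set_inter_closedBall (n m : ℕ) (hm : 1 ≤ m) (hmn : m ≤ n) :
    ({z : EuclideanSpace ℂ (Fin n) | modelPoly n m z = 0} ∩
        Metric.closedBall (0 : EuclideanSpace ℂ (Fin n)) 1)
      = {z : EuclideanSpace ℂ (Fin n) |
          ∃ θ : Fin (m - 1) → ℝ, (∀ j, θ j ∈ Set.Ico 0 (2 * π)) ∧
            z = modelTorusPoint n m θ} ∧
    ∀ z ∈ {z : EuclideanSpace ℂ (Fin n) |
          ∃ θ : Fin (m - 1) → ℝ, (∀ j, θ j ∈ Set.Ico 0 (2 * π)) ∧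
            z = modelTorusPoint n m θ}, ‖z‖ = 1 := by
  obtain ⟨m', rfl⟩ : ∃ m', m = m' + 1 := ⟨m - 1, by omega⟩
  have hmn' : m' + 1 ≤ n := hmn
  constructor
  · ext z
    constructor
    · rintro ⟨hz0, hzball⟩
      have hb : ‖z‖ ≤ 1 := by
        rwa [Metric.mem_closedBall, dist_zero_right] at hzball
      exact forward n m' hmn' z hz0 hb
    · rintro ⟨θ, hθ, rfl⟩
      refine ⟨torus_zero n m' hmn' θ, ?_⟩
      rw [Metric.mem_closedBall, dist_zero_right, torus_norm n m' hmn' θ]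
  · rintro z ⟨θ, hθ, rfl⟩
    exact torus_norm n m' hmn' θ
end

section
/- If Ω ⊂ ℝᵐ is open, Φ : Ω → 𝕊 ⊂ ℂⁿ is C¹, non-singular (the Jacobian has rank m at every point) and complex tangential, then m ≤ n − 1. -/
open Asymptotics Filter Topology ContinuousLinearMap

set_option maxHeartbeats 1000000
open scoped ComplexConjugate

/-- (Rudin, Theorem 10.5.6.) If `Ω ⊂ ℝᵐ` is open and nonempty, and
`Φ : Ω → 𝕊 ⊂ ℂⁿ` is C¹, non-singular (the Jacobian is injective, i.e. has rank m,
at every point) and complex tangential, then `m ≤ n − 1`. -/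
theorem complexTangential_dim_le (m n : ℕ)
    (Ω : Set (EuclideanSpace ℝ (Fin m))) (hΩ : IsOpen Ω) (hne : Ω.Nonempty)
    (Φ : EuclideanSpace ℝ (Fin m) → EuclideanSpace ℂ (Fin n))
    (hΦ : ContDiffOn ℝ 1 Φ Ω) (hsph : ∀ x ∈ Ω, ‖Φ x‖ = 1)
    (hrank : ∀ x ∈ Ω, Function.Injective (fderiv ℝ Φ x))
    (htang : ∀ x ∈ Ω, ∀ h : EuclideanSpace ℝ (Fin m),
        (inner ℂ (Φ x) (fderiv ℝ Φ x h) : ℂ) = 0) :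
    m ≤ n - 1 := by
  classical
  obtain ⟨x₀, hx₀⟩ := hne
  set J : EuclideanSpace ℝ (Fin m) → (EuclideanSpace ℝ (Fin m) →L[ℝ] EuclideanSpace ℂ (Fin n)) :=
    fun y => fderiv ℝ Φ y with hJdef
  have hdiff : ∀ y ∈ Ω, HasFDerivAt Φ (J y) y := by
    intro y hy
    exact ((hΦ.differentiableOn one_ne_zero).differentiableAt (hΩ.mem_nhds hy)).hasFDerivAt
  have hJcont : ContinuousOn J Ω := hΦ.continuousOn_fderiv_of_isOpen hΩ le_rfl
  -- The key analytic fact: the Hermitian inner products of tangent vectors are symmetric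
  have key : ∀ h k : EuclideanSpace ℝ (Fin m),
      (inner ℂ (J x₀ h) (J x₀ k) : ℂ) = (inner ℂ (J x₀ k) (J x₀ h) : ℂ) := by
    set T : EuclideanSpace ℂ (Fin n) →L[ℝ] ℂ :=
      (innerSL ℂ (Φ x₀)).restrictScalars ℝ with hTdef
    set f : EuclideanSpace ℝ (Fin m) → ℂ := fun y => T (Φ y) with hfdef
    set f' : EuclideanSpace ℝ (Fin m) → (EuclideanSpace ℝ (Fin m) →L[ℝ] ℂ) :=
      fun y => T.comp (J y) with hf'def
    set G : EuclideanSpace ℝ (Fin m) →ₗ[ℝ] (EuclideanSpace ℝ (Fin m) →L[ℝ] ℂ) :=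
      { toFun := fun k => -(((innerSL ℂ (J x₀ k)).restrictScalars ℝ).comp (J x₀))
        map_add' := by
          intro a b
          ext h
          simp [inner_add_left]
          ring
        map_smul' := by
          intro r a
          ext h
          simp only [map_smul, ContinuousLinearMap.neg_apply, ContinuousLinearMap.comp_apply,
            ContinuousLinearMap.coe_restrictScalars', innerSL_apply_apply,
            RingHom.id_apply, ContinuousLinearMap.smul_apply]
          rw [RCLike.real_smul_eq_coe_smul (K := ℂ) r, inner_smul_left, RCLike.conj_ofReal]
          rw [Complex.real_smul]
          simp only [show ∀ r : ℝ, (RCLike.ofReal r : ℂ) = Complex.ofReal r from fun _ => rfl]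
          ring } with hGdef
    have hGapply : ∀ v h, G v h = -(inner ℂ (J x₀ v) (J x₀ h) : ℂ) := by
      intro v h
      simp [hGdef]
    set f'' : EuclideanSpace ℝ (Fin m) →L[ℝ] (EuclideanSpace ℝ (Fin m) →L[ℝ] ℂ) :=
      G.mkContinuous (‖J x₀‖ * ‖J x₀‖) (by
        intro v
        refine ContinuousLinearMap.opNorm_le_bound _ (by positivity) (fun h => ?_)
        rw [hGapply, norm_neg]
        calc ‖(inner ℂ (J x₀ v) (J x₀ h) : ℂ)‖ ≤ ‖J x₀ v‖ * ‖J x₀ h‖ := norm_inner_le_norm _ _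
          _ ≤ (‖J x₀‖ * ‖v‖) * (‖J x₀‖ * ‖h‖) := by
              gcongr <;> exact ContinuousLinearMap.le_opNorm _ _
          _ = ‖J x₀‖ * ‖J x₀‖ * ‖v‖ * ‖h‖ := by ring) with hf''def
    have hf''apply : ∀ v h, f'' v h = -(inner ℂ (J x₀ v) (J x₀ h) : ℂ) := by
      intro v h
      rw [hf''def]
      rw [show (G.mkContinuous (‖J x₀‖ * ‖J x₀‖) _) v = G v from rfl]
      exact hGapply v h
    have hf'apply : ∀ y h, f' y h = (inner ℂ (Φ x₀) (J y h) : ℂ) := by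
      intro y h
      simp [hf'def, hTdef]
    have hf'x₀ : f' x₀ = 0 := by
      ext h
      rw [hf'apply]
      simpa using htang x₀ hx₀ h
    have hfd : ∀ᶠ y in 𝓝 x₀, HasFDerivAt f (f' y) y := by
      filter_upwards [hΩ.mem_nhds hx₀] with y hy
      exact (T.hasFDerivAt).comp y (hdiff y hy)
    have hf'' : HasFDerivAt f' f'' x₀ := by
      apply HasFDerivAt.of_isLittleO
      rw [Asymptotics.isLittleO_iff]
      intro c hc
      have hden : (0:ℝ) < 2 * ‖J x₀‖ + 1 := by positivity
      set ε := c / (2 * ‖J x₀‖ + 1) with hεdef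
      have hε : 0 < ε := by positivity
      have h2 : ∀ᶠ y in 𝓝 x₀, ‖Φ y - Φ x₀ - J x₀ (y - x₀)‖ ≤ ε * ‖y - x₀‖ :=
        (hdiff x₀ hx₀).isLittleO.def hε
      have h3 : ∀ᶠ y in 𝓝 x₀, ‖J y - J x₀‖ < min ε 1 := by
        have hcJ : ContinuousAt J x₀ := hJcont.continuousAt (hΩ.mem_nhds hx₀)
        have hball := hcJ (Metric.ball_mem_nhds (J x₀) (lt_min hε one_pos))
        filter_upwards [hball] with y hy
        exact mem_ball_iff_norm.mp hy
      filter_upwards [hΩ.mem_nhds hx₀, h2, h3] with y hy hay hJy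
      rw [hf'x₀, sub_zero]
      refine ContinuousLinearMap.opNorm_le_bound _ (by positivity) (fun h => ?_)
      have e0 : (inner ℂ (Φ y) (J y h) : ℂ) = 0 := htang y hy h
      have expand : (f' y - f'' (y - x₀)) h
          = inner ℂ (Φ x₀ - Φ y + J x₀ (y - x₀)) (J y h)
            + inner ℂ (J x₀ (y - x₀)) (J x₀ h - J y h) := by
        rw [ContinuousLinearMap.sub_apply, hf'apply, hf''apply, inner_add_left,
          inner_sub_left, inner_sub_right, e0]
        ring
      have hJyn : ‖J y‖ ≤ ‖J x₀‖ + 1 := by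
        have h4 : ‖J y‖ - ‖J x₀‖ ≤ ‖J y - J x₀‖ := norm_sub_norm_le _ _
        have h5 : ‖J y - J x₀‖ ≤ 1 := le_of_lt (lt_of_lt_of_le hJy (min_le_right _ _))
        linarith
      have hJyε : ‖J y - J x₀‖ ≤ ε := le_of_lt (lt_of_lt_of_le hJy (min_le_left _ _))
      have ha : ‖Φ x₀ - Φ y + J x₀ (y - x₀)‖ ≤ ε * ‖y - x₀‖ := by
        have : Φ x₀ - Φ y + J x₀ (y - x₀) = -(Φ y - Φ x₀ - J x₀ (y - x₀)) := by abel
        rw [this, norm_neg]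
        exact hay
      calc ‖(f' y - f'' (y - x₀)) h‖
          ≤ ‖(inner ℂ (Φ x₀ - Φ y + J x₀ (y - x₀)) (J y h) : ℂ)‖
            + ‖(inner ℂ (J x₀ (y - x₀)) (J x₀ h - J y h) : ℂ)‖ := by
            rw [expand]; exact norm_add_le _ _
        _ ≤ ‖Φ x₀ - Φ y + J x₀ (y - x₀)‖ * ‖J y h‖
            + ‖J x₀ (y - x₀)‖ * ‖J x₀ h - J y h‖ := by
            gcongr <;> exact norm_inner_le_norm _ _
        _ ≤ (ε * ‖y - x₀‖) * ((‖J x₀‖ + 1) * ‖h‖)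
            + (‖J x₀‖ * ‖y - x₀‖) * (ε * ‖h‖) := by
            have h6 : ‖J y h‖ ≤ (‖J x₀‖ + 1) * ‖h‖ := by
              calc ‖J y h‖ ≤ ‖J y‖ * ‖h‖ := ContinuousLinearMap.le_opNorm _ _
                _ ≤ (‖J x₀‖ + 1) * ‖h‖ := by gcongr
            have h7 : ‖J x₀ (y - x₀)‖ ≤ ‖J x₀‖ * ‖y - x₀‖ :=
              ContinuousLinearMap.le_opNorm _ _
            have h8 : ‖J x₀ h - J y h‖ ≤ ε * ‖h‖ := by
              calc ‖J x₀ h - J y h‖ = ‖(J x₀ - J y) h‖ := by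
                    rw [ContinuousLinearMap.sub_apply]
                _ ≤ ‖J x₀ - J y‖ * ‖h‖ := ContinuousLinearMap.le_opNorm _ _
                _ ≤ ε * ‖h‖ := by
                    rw [norm_sub_rev]; gcongr
            exact add_le_add
              (mul_le_mul ha h6 (norm_nonneg _) (by positivity))
              (mul_le_mul h7 h8 (norm_nonneg _) (by positivity))
        _ = ε * (2 * ‖J x₀‖ + 1) * ‖y - x₀‖ * ‖h‖ := by ring
        _ = c * ‖y - x₀‖ * ‖h‖ := by
            rw [hεdef]; field_simp
        _ = c * ‖y - x₀‖ * ‖h‖ := rfl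
    have hsym := second_derivative_symmetric_of_eventually_of_real hfd hf''
    intro h k
    have := hsym h k
    rw [hf''apply, hf''apply] at this
    exact neg_injective this
  -- Linear algebra part: the ℝ-linear map (s, h) ↦ s • Φ x₀ + J x₀ h
  set P : (ℝ × EuclideanSpace ℝ (Fin m)) →ₗ[ℝ] EuclideanSpace ℂ (Fin n) :=
    (LinearMap.toSpanSingleton ℝ _ (Φ x₀)).coprod (J x₀ : _ →ₗ[ℝ] _) with hPdef
  set MI : EuclideanSpace ℂ (Fin n) →ₗ[ℝ] EuclideanSpace ℂ (Fin n) :=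
    (LinearMap.lsmul ℂ (EuclideanSpace ℂ (Fin n)) Complex.I).restrictScalars ℝ with hMIdef
  set L : ((ℝ × EuclideanSpace ℝ (Fin m)) × (ℝ × EuclideanSpace ℝ (Fin m))) →ₗ[ℝ]
      EuclideanSpace ℂ (Fin n) := P.coprod (MI.comp P) with hLdef
  have hPapply : ∀ s : ℝ, ∀ h : EuclideanSpace ℝ (Fin m), P (s, h) = s • Φ x₀ + J x₀ h := by
    intro s h; simp [hPdef, LinearMap.toSpanSingleton_apply]
  have hΦnorm : (inner ℂ (Φ x₀) (Φ x₀) : ℂ) = 1 := by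
    rw [inner_self_eq_norm_sq_to_K, hsph x₀ hx₀]; norm_num
  have htan₀ : ∀ v, (inner ℂ (Φ x₀) (J x₀ v) : ℂ) = 0 := fun v => htang x₀ hx₀ v
  have htan₀' : ∀ v, (inner ℂ (J x₀ v) (Φ x₀) : ℂ) = 0 := by
    intro v
    rw [← inner_conj_symm, htan₀, map_zero]
  have hip : ∀ (s t : ℝ) (h k : EuclideanSpace ℝ (Fin m)),
      (inner ℂ (s • Φ x₀ + J x₀ h) (t • Φ x₀ + J x₀ k) : ℂ)
        = (s : ℂ) * (t : ℂ) + inner ℂ (J x₀ h) (J x₀ k) := by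
    intro s t h k
    rw [inner_add_left, inner_add_right, inner_add_right]
    rw [RCLike.real_smul_eq_coe_smul (K := ℂ) s, RCLike.real_smul_eq_coe_smul (K := ℂ) t]
    rw [inner_smul_left, inner_smul_left, inner_smul_right, inner_smul_right]
    rw [hΦnorm, htan₀, htan₀']
    simp only [show ∀ r : ℝ, (RCLike.ofReal r : ℂ) = Complex.ofReal r from fun _ => rfl]
    push_cast [Complex.conj_ofReal]
    ring
  have him : ∀ h k : EuclideanSpace ℝ (Fin m), (inner ℂ (J x₀ h) (J x₀ k) : ℂ).im = 0 := by
    intro h k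
    rw [← Complex.conj_eq_iff_im, inner_conj_symm]
    exact (key h k).symm
  have hPzero : ∀ s : ℝ, ∀ h, s • Φ x₀ + J x₀ h = 0 → s = 0 ∧ h = 0 := by
    intro s h hzero
    have h1 : (inner ℂ (Φ x₀) (s • Φ x₀ + J x₀ h) : ℂ) = 0 := by rw [hzero, inner_zero_right]
    rw [inner_add_right, RCLike.real_smul_eq_coe_smul (K := ℂ) s, inner_smul_right, hΦnorm,
      htan₀, mul_one, add_zero] at h1
    have hs : s = 0 := Complex.ofReal_eq_zero.mp h1
    refine ⟨hs, ?_⟩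
    have h2 : J x₀ h = 0 := by rw [hs, zero_smul, zero_add] at hzero; exact hzero
    have h3 : J x₀ h = J x₀ 0 := by simpa using h2
    exact hrank x₀ hx₀ h3
  have hL : Function.Injective L := by
    rw [← LinearMap.ker_eq_bot, LinearMap.ker_eq_bot']
    rintro ⟨⟨s, h⟩, ⟨t, k⟩⟩ hz
    have hz' : P (s, h) + Complex.I • P (t, k) = 0 := by
      simpa [hLdef, hMIdef] using hz
    have hpq_real : (inner ℂ (P (s, h)) (P (t, k)) : ℂ).im = 0 := by
      rw [hPapply, hPapply, hip]
      simp only [Complex.add_im, Complex.mul_im, Complex.ofReal_re, Complex.ofReal_im, him h k]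
      ring
    have hinner0 : (inner ℂ (P (s, h)) (P (s, h) + Complex.I • P (t, k)) : ℂ) = 0 := by
      rw [hz', inner_zero_right]
    rw [inner_add_right, inner_smul_right] at hinner0
    have hre := congrArg Complex.re hinner0
    rw [Complex.add_re, Complex.mul_re, Complex.I_re, Complex.I_im] at hre
    simp only [zero_mul, one_mul, zero_sub, hpq_real, neg_zero, add_zero, Complex.zero_re] at hre
    have hp0 : P (s, h) = 0 := by
      have hzz : (inner ℂ (P (s, h)) (P (s, h)) : ℂ) = 0 := by
        have him0 : (inner ℂ (P (s, h)) (P (s, h)) : ℂ).im = 0 := by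
          rw [← Complex.conj_eq_iff_im, inner_conj_symm]
        exact Complex.ext (by simpa using hre) (by simpa using him0)
      exact inner_self_eq_zero.mp hzz
    have hq0 : P (t, k) = 0 := by
      have hIq : Complex.I • P (t, k) = 0 := by rw [hp0, zero_add] at hz'; exact hz'
      rcases smul_eq_zero.mp hIq with hI | h0
      · exact absurd hI Complex.I_ne_zero
      · exact h0
    rw [hPapply] at hp0 hq0
    obtain ⟨hs, hh⟩ := hPzero s h hp0
    obtain ⟨ht, hk⟩ := hPzero t k hq0
    simp [Prod.ext_iff, hs, hh, ht, hk]
  have hfin : Module.finrank ℝ ((ℝ × EuclideanSpace ℝ (Fin m)) × (ℝ × EuclideanSpace ℝ (Fin m)))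
      ≤ Module.finrank ℝ (EuclideanSpace ℂ (Fin n)) :=
    LinearMap.finrank_le_finrank_of_injective hL
  have hdom : Module.finrank ℝ ((ℝ × EuclideanSpace ℝ (Fin m)) × (ℝ × EuclideanSpace ℝ (Fin m)))
      = 2 * (m + 1) := by
    simp only [Module.finrank_prod, finrank_euclideanSpace, Fintype.card_fin, Module.finrank_self]
    ring
  have hcodom : Module.finrank ℝ (EuclideanSpace ℂ (Fin n)) = 2 * n := by
    have h1 : Module.finrank ℝ ℂ * Module.finrank ℂ (EuclideanSpace ℂ (Fin n))
        = Module.finrank ℝ (EuclideanSpace ℂ (Fin n)) :=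
      Module.finrank_mul_finrank ℝ ℂ (EuclideanSpace ℂ (Fin n))
    rw [Complex.finrank_real_complex, finrank_euclideanSpace, Fintype.card_fin] at h1
    omega
  rw [hdom, hcodom] at hfin
  omega
end

section
/- Let Ψ : (−1,1)ᵐ → 𝕊 ⊂ ℂⁿ be a real-analytic complex tangential map. Then there exist δ > 0 and C > 0 such that |1 − ⟨Ψ(θ), Ψ(θ')⟩| ≤ C‖θ − θ'‖² for all θ, θ' with ‖θ‖, ‖θ'‖ < δ and ‖θ − θ'‖ < δ. -/
open Metric Set

lemma euclid_coord_le_norm {m : ℕ} (θ : EuclideanSpace ℝ (Fin m)) (j : Fin m) :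
    |θ j| ≤ ‖θ‖ := by
  rw [EuclideanSpace.norm_eq]
  have h1 : |θ j| ^ 2 ≤ ∑ i, ‖θ i‖ ^ 2 := by
    have : ‖θ j‖ ^ 2 ≤ ∑ i, ‖θ i‖ ^ 2 :=
      Finset.single_le_sum (f := fun i => ‖θ i‖ ^ 2) (fun i _ => by positivity)
        (Finset.mem_univ j)
    simpa using this
  calc |θ j| = Real.sqrt (|θ j| ^ 2) := by rw [Real.sqrt_sq_eq_abs, abs_abs]
  _ ≤ Real.sqrt (∑ i, ‖θ i‖ ^ 2) := Real.sqrt_le_sqrt h1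

/-- Let `Ψ : (−1,1)ᵐ → 𝕊 ⊂ ℂⁿ` be a real-analytic complex tangential map. Then
there exist `δ > 0` and `C > 0` such that `|1 − ⟨Ψ(θ), Ψ(θ')⟩| ≤ C ‖θ − θ'‖²`
for all `θ, θ'` with `‖θ‖, ‖θ'‖ < δ` and `‖θ − θ'‖ < δ`. -/
theorem upper_anisotropic_estimate (m n : ℕ)
    (Ψ : EuclideanSpace ℝ (Fin m) → EuclideanSpace ℂ (Fin n))
    (hΨ : AnalyticOnNhd ℝ Ψ {θ | ∀ j, |θ j| < 1})
    (hsph : ∀ θ ∈ {θ : EuclideanSpace ℝ (Fin m) | ∀ j, |θ j| < 1}, ‖Ψ θ‖ = 1)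
    (htang : ∀ θ ∈ {θ : EuclideanSpace ℝ (Fin m) | ∀ j, |θ j| < 1},
        ∀ h : EuclideanSpace ℝ (Fin m), (inner ℂ (Ψ θ) (fderiv ℝ Ψ θ h) : ℂ) = 0) :
    ∃ δ > (0 : ℝ), ∃ C > (0 : ℝ), ∀ θ θ' : EuclideanSpace ℝ (Fin m),
      ‖θ‖ < δ → ‖θ'‖ < δ → ‖θ - θ'‖ < δ →
      ‖(1 - (inner ℂ (Ψ θ') (Ψ θ) : ℂ))‖ ≤ C * ‖θ - θ'‖ ^ 2 := by
  set U : Set (EuclideanSpace ℝ (Fin m)) := {θ | ∀ j, |θ j| < 1} with hUdef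
  have hball : closedBall (0 : EuclideanSpace ℝ (Fin m)) (1/2) ⊆ U := by
    intro x hx j
    have := euclid_coord_le_norm x j
    have hx' : ‖x‖ ≤ 1/2 := by simpa using mem_closedBall_zero_iff.mp hx
    linarith
  -- second derivative bound on the ball
  have hd2 : ∀ x ∈ U, AnalyticAt ℝ (fderiv ℝ Ψ) x := fun x hx => (hΨ x hx).fderiv
  have hd3 : ContinuousOn (fderiv ℝ (fderiv ℝ Ψ))
      (closedBall (0 : EuclideanSpace ℝ (Fin m)) (1/2)) :=
    fun x hx => ((hd2 x (hball hx)).fderiv).continuousAt.continuousWithinAt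
  obtain ⟨K, hK⟩ :=
    (isCompact_closedBall (0 : EuclideanSpace ℝ (Fin m)) (1/2)).exists_bound_of_continuousOn
      (E := EuclideanSpace ℝ (Fin m) →L[ℝ] EuclideanSpace ℝ (Fin m) →L[ℝ] EuclideanSpace ℂ (Fin n)) hd3
  -- Lipschitz bound for fderiv Ψ on the ball
  have hLip : ∀ x ∈ closedBall (0 : EuclideanSpace ℝ (Fin m)) (1/2),
      ∀ y ∈ closedBall (0 : EuclideanSpace ℝ (Fin m)) (1/2),
      ‖fderiv ℝ Ψ y - fderiv ℝ Ψ x‖ ≤ K * ‖y - x‖ := by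
    intro x hx y hy
    exact Convex.norm_image_sub_le_of_norm_fderiv_le
      (fun z hz => (hd2 z (hball hz)).differentiableAt) hK (convex_closedBall _ _) hx hy
  have hK0 : (0 : ℝ) ≤ K := le_trans (norm_nonneg _) (hK 0 (mem_closedBall_self (by norm_num)))
  refine ⟨1/4, by norm_num, K + 1, by linarith, ?_⟩
  intro θ θ' hθ hθ' hd
  set v : EuclideanSpace ℝ (Fin m) := θ - θ' with hv
  set c : ℝ → EuclideanSpace ℝ (Fin m) := fun t => θ' + t • v with hc
  have hc0 : c 0 = θ' := by simp [hc]
  have hc1 : c 1 = θ := by simp [hc, hv]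
  have hcball : ∀ t ∈ Icc (0:ℝ) 1,
      c t ∈ closedBall (0 : EuclideanSpace ℝ (Fin m)) (1/2) := by
    intro t ht
    rw [mem_closedBall_zero_iff]
    calc ‖θ' + t • v‖ ≤ ‖θ'‖ + ‖t • v‖ := norm_add_le _ _
    _ ≤ ‖θ'‖ + ‖v‖ := by
        rw [norm_smul]
        have : ‖t‖ ≤ 1 := by rw [Real.norm_eq_abs, abs_le]; exact ⟨by linarith [ht.1], ht.2⟩
        nlinarith [norm_nonneg v]
    _ ≤ 1/2 := by rw [hv]; linarith
  have hθ'ball : θ' ∈ closedBall (0 : EuclideanSpace ℝ (Fin m)) (1/2) :=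
    hc0 ▸ hcball 0 (by norm_num)
  have hθ'U : θ' ∈ U := hball hθ'ball
  -- the one-variable function
  set G : ℝ → ℂ := fun t => (inner ℂ (Ψ θ') (Ψ (c t)) : ℂ) with hG
  set G' : ℝ → ℂ := fun t => (inner ℂ (Ψ θ') (fderiv ℝ Ψ (c t) v) : ℂ) with hG'
  have hderiv : ∀ t ∈ Icc (0:ℝ) 1, HasDerivWithinAt G (G' t) (Icc (0:ℝ) 1) t := by
    intro t ht
    have hct : HasDerivAt c v t := by
      have : HasDerivAt (fun s : ℝ => s • v) v t := by
        simpa using (hasDerivAt_id t).smul_const v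
      exact this.const_add θ'
    have hΨd : HasFDerivAt Ψ (fderiv ℝ Ψ (c t)) (c t) :=
      ((hΨ (c t) (hball (hcball t ht))).differentiableAt).hasFDerivAt
    have hcomp : HasDerivAt (fun s => Ψ (c s)) (fderiv ℝ Ψ (c t) v) t :=
      hΨd.comp_hasDerivAt t hct
    have := ((innerSL ℂ (Ψ θ')).restrictScalars ℝ).hasFDerivAt.comp_hasDerivAt t hcomp
    exact this.hasDerivWithinAt
  have hbound : ∀ t ∈ Ico (0:ℝ) 1, ‖G' t‖ ≤ (K + 1) * ‖v‖ ^ 2 := by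
    intro t ht
    have ht' : t ∈ Icc (0:ℝ) 1 := Ico_subset_Icc_self ht
    have h0 : (inner ℂ (Ψ θ') (fderiv ℝ Ψ θ' v) : ℂ) = 0 := htang θ' hθ'U v
    have hrw : G' t = (inner ℂ (Ψ θ') ((fderiv ℝ Ψ (c t) - fderiv ℝ Ψ θ') v) : ℂ) := by
      rw [hG', ContinuousLinearMap.sub_apply, inner_sub_right, h0, sub_zero]
    rw [hrw]
    have hvn : (0:ℝ) ≤ ‖v‖ := norm_nonneg v
    have hct : ‖c t - θ'‖ = t * ‖v‖ := by
      rw [hc]; simp [norm_smul, abs_of_nonneg ht.1]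
    calc ‖(inner ℂ (Ψ θ') ((fderiv ℝ Ψ (c t) - fderiv ℝ Ψ θ') v) : ℂ)‖
        ≤ ‖Ψ θ'‖ * ‖(fderiv ℝ Ψ (c t) - fderiv ℝ Ψ θ') v‖ := norm_inner_le_norm _ _
      _ ≤ 1 * (‖fderiv ℝ Ψ (c t) - fderiv ℝ Ψ θ'‖ * ‖v‖) := by
          rw [hsph θ' hθ'U]
          exact mul_le_mul_of_nonneg_left ((fderiv ℝ Ψ (c t) - fderiv ℝ Ψ θ').le_opNorm v)
            zero_le_one
      _ ≤ 1 * ((K * ‖c t - θ'‖) * ‖v‖) := by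
          have := hLip θ' hθ'ball (c t) (hcball t ht')
          nlinarith
      _ ≤ (K + 1) * ‖v‖ ^ 2 := by
          rw [hct]
          have hKt : K * t ≤ K := mul_le_of_le_one_right hK0 ht.2.le
          nlinarith [sq_nonneg ‖v‖]
  have key := norm_image_sub_le_of_norm_deriv_le_segment' hderiv hbound 1
    (right_mem_Icc.mpr zero_le_one)
  have hG0 : G 0 = 1 := by
    show (inner ℂ (Ψ θ') (Ψ (c 0)) : ℂ) = 1
    rw [hc0, inner_self_eq_norm_sq_to_K, hsph θ' hθ'U]
    norm_num
  have hG1 : G 1 = (inner ℂ (Ψ θ') (Ψ θ) : ℂ) := by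
    show (inner ℂ (Ψ θ') (Ψ (c 1)) : ℂ) = _
    rw [hc1]
  have habs : ‖(1 - (inner ℂ (Ψ θ') (Ψ θ) : ℂ))‖ = ‖G 1 - G 0‖ := by
    rw [hG1, hG0, norm_sub_rev]
  rw [habs]
  calc ‖G 1 - G 0‖ ≤ (K + 1) * ‖v‖ ^ 2 * (1 - 0) := key
  _ = (K + 1) * ‖v‖ ^ 2 := by ring
end

section
/- For m ∈ {2, …, n}, the map Φ(θ) = (1/√m)(e^{iθ₁}, …, e^{iθ_{m−1}}, e^{−i(θ₁+⋯+θ_{m−1})}, 0, …, 0) restricted to (−π, π)^{m−1} is an injective immersion into the unit sphere of ℂⁿ; in particular the boundary zero set Z(π_m) ∩ 𝕊 contains a real submanifold of ℝ²ⁿ of dimension m − 1. -/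
open scoped Real

/-! ### Auxiliary material -/

/-- The explicit torus map. -/
noncomputable def auxPhi (k n : ℕ) (c : ℝ) (θ : EuclideanSpace ℝ (Fin (k+1))) :
    EuclideanSpace ℂ (Fin n) :=
  WithLp.toLp 2 (fun i : Fin n =>
    if h : (i : ℕ) < k + 1 then
      (c : ℂ) * Complex.exp (Complex.I * (θ ⟨i, h⟩ : ℝ))
    else if (i : ℕ) = k + 1 then
      (c : ℂ) * Complex.exp (-Complex.I * ((∑ j, θ j : ℝ) : ℂ))
    else 0)

lemma aux_filter_univ_lt_eq_map {n k : ℕ} (h : k ≤ n) :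
    Finset.univ.filter (fun i : Fin n => (i : ℕ) < k) =
      Finset.univ.map (Fin.castLEEmb h) := by
  ext i
  simp only [Finset.mem_filter, Finset.mem_univ, true_and, Finset.mem_map,
    Fin.castLEEmb, Function.Embedding.coeFn_mk]
  constructor
  · intro hi; exact ⟨⟨i, hi⟩, by simp [Fin.ext_iff]⟩
  · rintro ⟨j, rfl⟩; exact j.2

lemma aux_exp_inj (a b : ℝ) (ha : |a| < π) (hb : |b| < π)
    (h : Complex.exp (Complex.I * (a:ℝ)) = Complex.exp (Complex.I * (b:ℝ))) : a = b := by
  rw [Complex.exp_eq_exp_iff_exists_int] at h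
  obtain ⟨t, ht⟩ := h
  have ht' : a = b + t * (2 * π) := by
    have := congrArg Complex.im ht
    simpa using this
  have habs : |(t:ℝ) * (2*π)| < 2 * π := by
    rw [show (t:ℝ) * (2*π) = a - b by rw [ht']; ring]
    calc |a - b| ≤ |a| + |b| := abs_sub _ _
      _ < 2 * π := by linarith
  have ht0 : t = 0 := by
    have h2π : (0:ℝ) < 2 * π := by positivity
    rw [abs_mul, abs_of_pos h2π] at habs
    have h0 : |(t:ℝ)| < 1 := by
      by_contra hcon
      push_neg at hcon
      nlinarith
    have h1 : |t| < 1 := by exact_mod_cast h0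
    rw [abs_lt] at h1; omega
  rw [ht0] at ht'; simpa using ht'

section auxsec
variable (k n : ℕ) (c : ℝ)

lemma aux_hasFDerivAt_comp_exp (j : Fin (k+1)) (θ : EuclideanSpace ℝ (Fin (k+1))) :
    HasFDerivAt (fun θ : EuclideanSpace ℝ (Fin (k+1)) =>
        (c : ℂ) * Complex.exp (Complex.I * (θ j : ℝ)))
      (((c : ℂ) * Complex.exp (Complex.I * (θ j : ℝ))) •
        (Complex.I • ((Complex.ofRealCLM.comp (EuclideanSpace.proj j)) :
          EuclideanSpace ℝ (Fin (k+1)) →L[ℝ] ℂ))) θ := by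
  have h0 : HasFDerivAt (fun θ : EuclideanSpace ℝ (Fin (k+1)) => Complex.I * (θ j : ℝ))
      (Complex.I • (Complex.ofRealCLM.comp (EuclideanSpace.proj j))) θ :=
    (Complex.I • (Complex.ofRealCLM.comp (EuclideanSpace.proj j) :
      EuclideanSpace ℝ (Fin (k+1)) →L[ℝ] ℂ)).hasFDerivAt
  have h2 := h0.cexp.const_mul (c : ℂ)
  convert h2 using 1
  case e'_12 => exact (smul_smul _ _ _).symm
  all_goals rfl

lemma aux_hasFDerivAt_comp_exp_sum (θ : EuclideanSpace ℝ (Fin (k+1))) :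
    HasFDerivAt (fun θ : EuclideanSpace ℝ (Fin (k+1)) =>
        (c : ℂ) * Complex.exp (-Complex.I * ((∑ j, θ j : ℝ) : ℂ)))
      (((c : ℂ) * Complex.exp (-Complex.I * ((∑ j, θ j : ℝ) : ℂ))) •
        ((-Complex.I) • ((Complex.ofRealCLM.comp (∑ j, EuclideanSpace.proj j)) :
          EuclideanSpace ℝ (Fin (k+1)) →L[ℝ] ℂ))) θ := by
  have h0 : HasFDerivAt (fun θ : EuclideanSpace ℝ (Fin (k+1)) =>
      -Complex.I * ((∑ j, θ j : ℝ) : ℂ))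
      ((-Complex.I) • (Complex.ofRealCLM.comp (∑ j, EuclideanSpace.proj j))) θ := by
    have := ((-Complex.I) • (Complex.ofRealCLM.comp (∑ j, EuclideanSpace.proj j) :
      EuclideanSpace ℝ (Fin (k+1)) →L[ℝ] ℂ)).hasFDerivAt (x := θ)
    convert this using 2 with θ
    simp [smul_eq_mul, ContinuousLinearMap.sum_apply]
  have h2 := h0.cexp.const_mul (c : ℂ)
  convert h2 using 1
  case e'_12 => exact (smul_smul _ _ _).symm
  all_goals rfl

lemma aux_diffi (i : Fin n) : Differentiable ℝ (fun θ => auxPhi k n c θ i) := by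
  by_cases h1 : (i:ℕ) < k + 1
  · have h : (fun θ => auxPhi k n c θ i) =
        fun θ : EuclideanSpace ℝ (Fin (k+1)) =>
          (c : ℂ) * Complex.exp (Complex.I * (θ ⟨i, h1⟩ : ℝ)) := by
      funext θ; simp only [auxPhi, dif_pos h1]
    rw [h]
    exact fun θ => (aux_hasFDerivAt_comp_exp k c ⟨i, h1⟩ θ).differentiableAt
  · by_cases h2 : (i:ℕ) = k + 1
    · have h : (fun θ => auxPhi k n c θ i) =
          fun θ : EuclideanSpace ℝ (Fin (k+1)) => (c : ℂ) *
            Complex.exp (-Complex.I * ((∑ j, θ j : ℝ) : ℂ)) := by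
        funext θ; simp only [auxPhi, dif_neg h1, if_pos h2]
      rw [h]
      exact fun θ => (aux_hasFDerivAt_comp_exp_sum k c θ).differentiableAt
    · have h : (fun θ => auxPhi k n c θ i) = fun _ => (0:ℂ) := by
        funext θ; simp only [auxPhi, dif_neg h1, if_neg h2]
      rw [h]; exact differentiable_const _

lemma aux_diffPhi : Differentiable ℝ (auxPhi k n c) := by
  have he : auxPhi k n c = (PiLp.continuousLinearEquiv 2 ℝ (fun _ : Fin n => ℂ)).symm ∘
      (fun θ (i : Fin n) => auxPhi k n c θ i) := rfl
  rw [he]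
  exact (PiLp.continuousLinearEquiv 2 ℝ (fun _ : Fin n => ℂ)).symm.differentiable.comp
    (differentiable_pi.2 (aux_diffi k n c))

lemma aux_fderiv_apply_i (θ : EuclideanSpace ℝ (Fin (k+1))) (i : Fin n)
    (v : EuclideanSpace ℝ (Fin (k+1))) :
    fderiv ℝ (auxPhi k n c) θ v i = fderiv ℝ (fun θ => auxPhi k n c θ i) θ v := by
  have hL : (fun θ => auxPhi k n c θ i) =
      ((EuclideanSpace.proj i : EuclideanSpace ℂ (Fin n) →L[ℂ] ℂ).restrictScalars ℝ) ∘
        (auxPhi k n c) := rfl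
  rw [hL, fderiv_comp θ (ContinuousLinearMap.differentiableAt _) (aux_diffPhi k n c θ),
    ContinuousLinearMap.fderiv]
  rfl

lemma aux_immersion (hmn : k + 2 ≤ n) (hc0 : 0 < c) (θ : EuclideanSpace ℝ (Fin (k+1))) :
    Function.Injective (fderiv ℝ (auxPhi k n c) θ) := by
  have key : ∀ v, fderiv ℝ (auxPhi k n c) θ v = 0 → v = 0 := by
    intro v hv
    ext j
    have hj : (j : ℕ) < k + 1 := j.2
    have hi : (j : ℕ) < n := by omega
    set i : Fin n := ⟨j, hi⟩ with hidef
    have h1 : fderiv ℝ (fun θ => auxPhi k n c θ i) θ v = 0 := by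
      rw [← aux_fderiv_apply_i k n c, hv]; rfl
    have hcomp : (fun θ => auxPhi k n c θ i) =
        fun θ : EuclideanSpace ℝ (Fin (k+1)) =>
          (c : ℂ) * Complex.exp (Complex.I * (θ ⟨i, hj⟩ : ℝ)) := by
      funext θ; simp only [auxPhi, dif_pos (show (i:ℕ) < k + 1 from hj)]
    rw [hcomp, (aux_hasFDerivAt_comp_exp k c ⟨i, hj⟩ θ).fderiv] at h1
    simp only [ContinuousLinearMap.smul_apply, ContinuousLinearMap.comp_apply,
      Complex.ofRealCLM_apply, PiLp.proj_apply, smul_eq_mul] at h1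
    rcases mul_eq_zero.1 h1 with h | h
    · rcases mul_eq_zero.1 h with h' | h'
      · exact absurd h' (by exact_mod_cast hc0.ne')
      · exact absurd h' (Complex.exp_ne_zero _)
    · rcases mul_eq_zero.1 h with h' | h'
      · exact absurd h' Complex.I_ne_zero
      · have hz : v ⟨(i:ℕ), hj⟩ = (0:ℝ) := by exact_mod_cast h'
        exact hz
  intro v w hvw
  have h2 : v - w = 0 := key (v - w) (by rw [map_sub, hvw, sub_self])
  ext j
  have := congrArg (fun x => x j) h2
  simpa [sub_eq_zero] using this

lemma aux_prodPhi (hmn : k + 2 ≤ n) (θ : EuclideanSpace ℝ (Fin (k+1))) :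
    ∏ i ∈ Finset.univ.filter (fun i : Fin n => (i : ℕ) < k+2), auxPhi k n c θ i
      = (c : ℂ) ^ (k+2) := by
  simp only [auxPhi]
  rw [aux_filter_univ_lt_eq_map hmn, Finset.prod_map]
  rw [Fin.prod_univ_castSucc]
  have hlast : (((Fin.castLEEmb hmn) (Fin.last (k+1)) : Fin n) : ℕ) = k + 1 := rfl
  have hstep : ∀ j : Fin (k+1),
      (if h : (((Fin.castLEEmb hmn) (Fin.castSucc j) : Fin n) : ℕ) < k + 1 then
        (c : ℂ) * Complex.exp (Complex.I *
          (θ ⟨((Fin.castLEEmb hmn) (Fin.castSucc j) : Fin n), h⟩ : ℝ))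
      else if (((Fin.castLEEmb hmn) (Fin.castSucc j) : Fin n) : ℕ) = k + 1 then
        (c : ℂ) * Complex.exp (-Complex.I * ((∑ j, θ j : ℝ) : ℂ))
      else 0) = (c : ℂ) * Complex.exp (Complex.I * (θ j : ℝ)) := by
    intro j
    have hj : (((Fin.castLEEmb hmn) (Fin.castSucc j) : Fin n) : ℕ) < k + 1 := by
      simpa [Fin.castLEEmb] using j.2
    rw [dif_pos hj]
    rfl
  simp only [hstep]
  rw [dif_neg (by simp), if_pos hlast]
  rw [Finset.prod_mul_distrib, Finset.prod_const, ← Complex.exp_sum]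
  have hs : ∑ j : Fin (k+1), Complex.I * ((θ j : ℝ) : ℂ)
      = Complex.I * ((∑ j, θ j : ℝ) : ℂ) := by
    rw [← Finset.mul_sum]; push_cast; ring
  rw [hs, Finset.card_univ, Fintype.card_fin]
  have hE : Complex.exp (Complex.I * ((∑ j, θ j : ℝ) : ℂ)) *
      Complex.exp (-Complex.I * ((∑ j, θ j : ℝ) : ℂ)) = 1 := by
    rw [← Complex.exp_add, show Complex.I * ((∑ j, θ j : ℝ) : ℂ) +
      -Complex.I * ((∑ j, θ j : ℝ) : ℂ) = 0 by ring, Complex.exp_zero]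
  calc (c:ℂ)^(k+1) * Complex.exp (Complex.I * ((∑ j, θ j : ℝ) : ℂ)) *
        ((c:ℂ) * Complex.exp (-Complex.I * ((∑ j, θ j : ℝ) : ℂ)))
      = (c:ℂ)^(k+1) * (c:ℂ) * (Complex.exp (Complex.I * ((∑ j, θ j : ℝ) : ℂ)) *
        Complex.exp (-Complex.I * ((∑ j, θ j : ℝ) : ℂ))) := by ring
    _ = (c:ℂ)^(k+2) := by rw [hE, mul_one, ← pow_succ]

lemma aux_norm_sq_term (hc0 : 0 < c) (θ : EuclideanSpace ℝ (Fin (k+1))) (i : Fin n) :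
    ‖auxPhi k n c θ i‖^2 = if (i:ℕ) < k + 2 then c^2 else 0 := by
  by_cases h1 : (i:ℕ) < k+1
  · rw [show auxPhi k n c θ i = (c : ℂ) * Complex.exp (Complex.I * (θ ⟨i, h1⟩ : ℝ)) from by
      simp only [auxPhi, dif_pos h1], if_pos (by omega)]
    simp [map_mul, Complex.norm_exp, abs_of_pos hc0]
  · by_cases h2 : (i:ℕ) = k+1
    · rw [show auxPhi k n c θ i =
          (c : ℂ) * Complex.exp (-Complex.I * ((∑ j, θ j : ℝ) : ℂ)) from by
        simp only [auxPhi, dif_neg h1, if_pos h2], if_pos (by omega)]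
      simp [map_mul, Complex.norm_exp, abs_of_pos hc0]
    · rw [show auxPhi k n c θ i = 0 from by
        simp only [auxPhi, dif_neg h1, if_neg h2], if_neg (by omega)]
      simp

end auxsec

lemma aux_scalar (k : ℕ) :
    (((k+2:ℕ):ℝ) ^ (((k+2:ℕ):ℝ) / 2)) * ((Real.sqrt ((k+2:ℕ):ℝ))⁻¹)^(k+2) = 1 := by
  have hpos : (0:ℝ) < ((k+2:ℕ):ℝ) := by positivity
  rw [inv_pow, Real.sqrt_eq_rpow, ← Real.rpow_natCast (((k+2:ℕ):ℝ) ^ (1/2:ℝ)) (k+2),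
    ← Real.rpow_mul hpos.le]
  rw [mul_inv_eq_one₀ (by positivity)]
  congr 1; push_cast; ring

/-- For `m ∈ {2, …, n}`, the map
`Φ(θ) = (1/√m)(e^{iθ₁}, …, e^{iθ_{m−1}}, e^{−i(θ₁+⋯+θ_{m−1})}, 0, …, 0)`
restricted to `(−π, π)^{m−1}` is an injective immersion into the unit sphere of ℂⁿ
whose image lies in the boundary zero set `Z(π_m) ∩ 𝕊`; in particular `Z(π_m) ∩ 𝕊`
contains a real submanifold of ℝ²ⁿ of dimension `m − 1`. -/
theorem modelTorus_injective_immersion (m n : ℕ) (hm : 2 ≤ m) (hmn : m ≤ n)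
    (Φ : EuclideanSpace ℝ (Fin (m - 1)) → EuclideanSpace ℂ (Fin n))
    (hΦ : ∀ (θ : EuclideanSpace ℝ (Fin (m - 1))) (i : Fin n),
        Φ θ i =
          if h : (i : ℕ) < m - 1 then
            ((Real.sqrt m)⁻¹ : ℝ) * Complex.exp (Complex.I * (θ ⟨i, h⟩ : ℝ))
          else if (i : ℕ) = m - 1 then
            ((Real.sqrt m)⁻¹ : ℝ) * Complex.exp (-Complex.I * ((∑ j, θ j : ℝ) : ℂ))
          else 0) :
    Set.InjOn Φ {θ | ∀ j, |θ j| < π} ∧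
    (∀ θ ∈ {θ : EuclideanSpace ℝ (Fin (m - 1)) | ∀ j, |θ j| < π},
        Function.Injective (fderiv ℝ Φ θ)) ∧
    Φ '' {θ | ∀ j, |θ j| < π} ⊆
      {z : EuclideanSpace ℂ (Fin n) | modelPoly n m z = 0} ∩
        Metric.sphere (0 : EuclideanSpace ℂ (Fin n)) 1 := by
  obtain ⟨k, rfl⟩ : ∃ k, m = k + 2 := ⟨m - 2, by omega⟩
  clear hm
  set c : ℝ := (Real.sqrt ((k+2 : ℕ) : ℝ))⁻¹ with hcdef
  have hk2pos : (0:ℝ) < ((k+2 : ℕ) : ℝ) := by positivity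
  have hsq : Real.sqrt ((k+2:ℕ) : ℝ) > 0 := Real.sqrt_pos.2 hk2pos
  have hc0 : (0:ℝ) < c := by positivity
  have hcC : ((c : ℝ) : ℂ) ≠ 0 := by exact_mod_cast hc0.ne'
  have hΦeq : Φ = auxPhi k n c := by
    funext θ; ext i; exact hΦ θ i
  subst hΦeq
  clear hΦ
  refine ⟨?_, ?_, ?_⟩
  · -- injectivity
    intro θ hθ θ' hθ' hEq
    ext j
    have hj : (j : ℕ) < k + 1 := j.2
    have hi : (j : ℕ) < n := by omega
    set i : Fin n := ⟨j, hi⟩ with hidef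
    have h1 := congrArg (fun x => x i) hEq
    simp only [auxPhi, dif_pos (show (i:ℕ) < k + 1 from hj)] at h1
    have h2 := mul_left_cancel₀ hcC h1
    have h3 := aux_exp_inj _ _ (hθ ⟨i, hj⟩) (hθ' ⟨i, hj⟩) h2
    convert h3 using 2
  · -- immersion
    exact fun θ _ => aux_immersion k n c hmn hc0 θ
  · -- image
    rintro z ⟨θ, hθ, rfl⟩
    constructor
    · show modelPoly n (k+2) (auxPhi k n c θ) = 0
      unfold modelPoly
      rw [aux_prodPhi k n c hmn θ, sub_eq_zero]
      rw [show ((c:ℂ))^(k+2) = ((c^(k+2) : ℝ) : ℂ) by push_cast; ring,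
        ← Complex.ofReal_mul]
      rw [show (((k+2:ℕ):ℝ) ^ (((k+2:ℕ):ℝ) / 2)) * c^(k+2) = 1 from aux_scalar k]
      norm_num
    · show auxPhi k n c θ ∈ Metric.sphere (0 : EuclideanSpace ℂ (Fin n)) 1
      rw [mem_sphere_zero_iff_norm, EuclideanSpace.norm_eq]
      have hterm : ∀ i : Fin n, ‖auxPhi k n c θ i‖^2 = if (i:ℕ) < k + 2 then c^2 else 0 :=
        aux_norm_sq_term k n c hc0 θ
      simp only [hterm]
      rw [← Finset.sum_filter, aux_filter_univ_lt_eq_map hmn, Finset.sum_const,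
        Finset.card_map, Finset.card_univ, Fintype.card_fin, nsmul_eq_mul]
      rw [hcdef, inv_pow, Real.sq_sqrt hk2pos.le, mul_inv_cancel₀ hk2pos.ne',
        Real.sqrt_one]
end
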